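/- arXiv:1803.01576 — 2 statements merged into one kernel-verified Lean document; each statement's English description precedes it below -/
import Mathlib

section
/- Let U be an n×k matrix with UᵀU = I_k, L = UUᵀ, and X a subset of {1,...,n} with |X| < k such that L_X is invertible. Then Σ_{i=1}^n (L_{ii} − L_{i,X} L_X^{-1} L_{X,i}) = k − |X|. -/
open Matrix

/-- For `L = U Uᵀ` with `U` an `n × k` matrix with orthonormal columns, and a subset
`X` with `|X| < k` such that `L_X` is invertible,
`∑ᵢ (Lᵢᵢ - L_{i,X} L_X⁻¹ L_{X,i}) = k - |X|`. -/
theorem sum_schur_complements_projection (n k : ℕ) (U : Matrix (Fin n) (Fin k) ℝ)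
    (hU : Uᵀ * U = 1) (L : Matrix (Fin n) (Fin n) ℝ) (hL : L = U * Uᵀ)
    (X : Finset (Fin n)) (hX : X.card < k)
    (hinv : IsUnit (L.submatrix (fun i : ↥X => (i : Fin n)) (fun i : ↥X => (i : Fin n))).det) :
    ∑ i : Fin n,
      (L i i - ∑ a : ↥X, ∑ b : ↥X,
        L i (a : Fin n) *
          (L.submatrix (fun i : ↥X => (i : Fin n)) (fun i : ↥X => (i : Fin n)))⁻¹ a b *
          L (b : Fin n) i)
      = (k : ℝ) - X.card := by
  set M := L.submatrix (fun i : ↥X => (i : Fin n)) (fun i : ↥X => (i : Fin n)) with hM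
  have hL2 : L * L = L := by
    rw [hL, Matrix.mul_assoc, ← Matrix.mul_assoc Uᵀ, hU, Matrix.one_mul]
  have hMinv : M⁻¹ * M = 1 := nonsing_inv_mul M hinv
  have htr : ∑ i : Fin n, L i i = (k : ℝ) := by
    have h1 : L.trace = (Uᵀ * U).trace := by rw [hL, Matrix.trace_mul_comm]
    rw [hU, Matrix.trace_one] at h1
    simpa [Matrix.trace, Matrix.diag] using h1
  have key : ∀ (a b : ↥X), ∑ i : Fin n, L (b : Fin n) i * L i (a : Fin n) = M b a := by
    intro a b
    have := congrFun (congrFun hL2 (b : Fin n)) (a : Fin n)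
    simpa [Matrix.mul_apply, hM, Matrix.submatrix_apply] using this
  have step : ∑ i : Fin n, ∑ a : ↥X, ∑ b : ↥X,
      L i (a : Fin n) * M⁻¹ a b * L (b : Fin n) i
      = ∑ a : ↥X, ∑ b : ↥X, M⁻¹ a b * M b a := by
    rw [Finset.sum_comm]
    refine Finset.sum_congr rfl fun a _ => ?_
    rw [Finset.sum_comm]
    refine Finset.sum_congr rfl fun b _ => ?_
    rw [← key a b, Finset.mul_sum]
    exact Finset.sum_congr rfl fun i _ => by ring
  have step2 : ∑ a : ↥X, ∑ b : ↥X, M⁻¹ a b * M b a = (X.card : ℝ) := by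
    have : ∑ a : ↥X, (M⁻¹ * M) a a = (X.card : ℝ) := by
      rw [hMinv]
      simp [Matrix.one_apply]
    simpa [Matrix.mul_apply] using this
  rw [Finset.sum_sub_distrib, htr, step, step2]
end

section
/- Let η ∈ [0,1]^n with Σ_i η_i = k (k a positive integer) and let m ≤ k. Then the m-th elementary symmetric polynomial satisfies e_m(η) ≥ C(k, m), with equality when exactly k of the η_i equal 1 and the rest are 0. -/
/-!
Let `T` be the random set of indices that contains each `i` independently with probability `η i`.
Then `e_m(η) = 𝔼 C(|T|, m)` and `𝔼 |T| = ∑ η i = k`. Since `j ↦ C(j, m + 1)` is discretely convex,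
it lies above its tangent line `C(k, m + 1) + C(k, m) (j - k)` at `k`, and taking expectations
gives `C(k, m + 1) ≤ e_{m+1}(η)`. When `η` is the indicator of a `k`-set `S`, `T = S` surely.
-/

open Finset

section Bernoulli

variable {ι R : Type*} [Fintype ι] [DecidableEq ι] [CommRing R]

noncomputable def bernoulliWeight (p : ι → R) (T : Finset ι) : R :=
  (∏ i ∈ T, p i) * ∏ i ∈ Tᶜ, (1 - p i)

lemma sum_bernoulliWeight_filter_superset (p : ι → R) (α : Finset ι) :
    ∑ T ∈ univ.filter (α ⊆ ·), bernoulliWeight p T = ∏ i ∈ α, p i := by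
  have hsplit : ∏ i ∈ α, p i = ∏ i, (p i + if i ∈ α then 0 else 1 - p i) := by
    rw [← Fintype.prod_ite_mem]
    exact Fintype.prod_congr _ _ fun i => by split_ifs <;> ring
  rw [hsplit, prod_add, ← powerset_univ, sum_filter]
  refine sum_congr rfl fun T _ => ?_
  rw [bernoulliWeight, ← compl_eq_univ_sdiff]
  split_ifs with hαT
  · congr 1
    exact prod_congr rfl fun i hi => by rw [if_neg fun hiα => mem_compl.1 hi (hαT hiα)]
  · obtain ⟨i, hiα, hiT⟩ := not_subset.1 hαT
    rw [prod_eq_zero (mem_compl.2 hiT) (by simp [hiα]), mul_zero]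

lemma sum_bernoulliWeight_mul_choose (p : ι → R) (m : ℕ) :
    ∑ T, bernoulliWeight p T * ((#T).choose m : R) = ∑ α ∈ powersetCard m univ, ∏ i ∈ α, p i := by
  simp_rw [← sum_bernoulliWeight_filter_superset]
  rw [sum_comm' (t' := univ) (s' := (·.powersetCard m))]
  · simp [card_powersetCard, mul_comm]
  · intro α T
    simp only [mem_powersetCard, mem_filter, mem_univ, subset_univ]
    tauto

lemma sum_bernoulliWeight (p : ι → R) : ∑ T, bernoulliWeight p T = 1 := by
  simpa using sum_bernoulliWeight_mul_choose p 0

lemma sum_bernoulliWeight_mul_card (p : ι → R) : ∑ T, bernoulliWeight p T * #T = ∑ i, p i := by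
  simpa [powersetCard_one] using sum_bernoulliWeight_mul_choose p 1

lemma bernoulliWeight_indicator (S T : Finset ι) :
    bernoulliWeight (fun i => if i ∈ S then (1 : R) else 0) T = if T = S then 1 else 0 := by
  rw [bernoulliWeight]
  split_ifs with hTS
  · subst hTS
    rw [prod_eq_one fun i hi => if_pos hi, prod_eq_one fun i hi => by simp [mem_compl.1 hi],
      one_mul]
  · obtain ⟨i, hiT, hiS⟩ | ⟨i, hiS, hiT⟩ :
        (∃ i ∈ T, i ∉ S) ∨ ∃ i ∈ S, i ∉ T := by
      by_contra! h
      exact hTS (Subset.antisymm h.1 h.2)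
    · rw [prod_eq_zero hiT (if_neg hiS), zero_mul]
    · rw [prod_eq_zero (mem_compl.2 hiT) (by simp [hiS]), mul_zero]

lemma bernoulliWeight_nonneg {p : ι → ℝ} (h0 : ∀ i, 0 ≤ p i) (h1 : ∀ i, p i ≤ 1) (T : Finset ι) :
    0 ≤ bernoulliWeight p T :=
  mul_nonneg (prod_nonneg fun i _ => h0 i) (prod_nonneg fun i _ => sub_nonneg.2 (h1 i))

end Bernoulli

namespace Nat

theorem choose_succ_add_sub_mul_choose_le {k j : ℕ} (m : ℕ) (h : k ≤ j) :
    k.choose (m + 1) + (j - k) * k.choose m ≤ j.choose (m + 1) := by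
  induction j, h using Nat.le_induction with
  | base => simp
  | succ j hkj ih =>
    have hmono : k.choose m ≤ j.choose m := choose_le_choose m hkj
    rw [show j + 1 - k = j - k + 1 by omega, succ_mul, choose_succ_succ']
    omega

theorem choose_succ_le_choose_succ_add_sub_mul {k j : ℕ} (m : ℕ) (h : j ≤ k) :
    k.choose (m + 1) ≤ j.choose (m + 1) + (k - j) * k.choose m := by
  induction k, h using Nat.le_induction with
  | base => simp
  | succ k hjk ih =>
    have hmono : k.choose m ≤ (k + 1).choose m := choose_le_succ k m
    have hmono' := Nat.mul_le_mul_left (k - j) hmono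
    rw [show k + 1 - j = k - j + 1 by omega, succ_mul, choose_succ_succ']
    omega

end Nat

theorem choose_succ_add_choose_mul_sub_le (k m j : ℕ) :
    (k.choose (m + 1) : ℝ) + k.choose m * ((j : ℝ) - k) ≤ j.choose (m + 1) := by
  rcases le_total k j with h | h
  · have := Nat.choose_succ_add_sub_mul_choose_le m h
    rw [← Nat.cast_le (α := ℝ)] at this
    push_cast [h] at this
    linarith
  · have := Nat.choose_succ_le_choose_succ_add_sub_mul m h
    rw [← Nat.cast_le (α := ℝ)] at this
    push_cast [h] at this
    linarith

theorem choose_le_sum_bernoulliWeight_mul_choose {ι : Type*} [Fintype ι] [DecidableEq ι]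
    {p : ι → ℝ} (h0 : ∀ i, 0 ≤ p i) (h1 : ∀ i, p i ≤ 1) {k : ℕ} (hsum : ∑ i, p i = k) (m : ℕ) :
    (k.choose m : ℝ) ≤ ∑ T, bernoulliWeight p T * ((#T).choose m : ℝ) := by
  rcases m with _ | m
  · simp [sum_bernoulliWeight]
  calc (k.choose (m + 1) : ℝ)
      = ∑ T, bernoulliWeight p T * (k.choose (m + 1) + k.choose m * ((#T : ℝ) - k)) := by
        simp only [mul_add, mul_sub, sum_add_distrib, sum_sub_distrib, ← sum_mul,
          mul_left_comm _ (k.choose m : ℝ), ← mul_sum, sum_bernoulliWeight,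
          sum_bernoulliWeight_mul_card, hsum]
        ring
    _ ≤ ∑ T, bernoulliWeight p T * ((#T).choose (m + 1) : ℝ) :=
        sum_le_sum fun T _ => mul_le_mul_of_nonneg_left
          (choose_succ_add_choose_mul_sub_le k m #T) (bernoulliWeight_nonneg h0 h1 T)

theorem esymm_lower_bound_general (n k m : ℕ)
    (η : Fin n → ℝ) (h0 : ∀ i, 0 ≤ η i) (h1 : ∀ i, η i ≤ 1)
    (hsum : ∑ i, η i = (k : ℝ)) :
    (k.choose m : ℝ) ≤
      ∑ α ∈ Finset.powersetCard m (Finset.univ : Finset (Fin n)), ∏ i ∈ α, η i ∧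
    (∀ S : Finset (Fin n), S.card = k → (∀ i, η i = if i ∈ S then 1 else 0) →
      ∑ α ∈ Finset.powersetCard m (Finset.univ : Finset (Fin n)), ∏ i ∈ α, η i
        = (k.choose m : ℝ)) := by
  rw [← sum_bernoulliWeight_mul_choose]
  refine ⟨choose_le_sum_bernoulliWeight_mul_choose h0 h1 hsum m, fun S hS hη => ?_⟩
  obtain rfl : η = fun i => if i ∈ S then 1 else 0 := funext hη
  simp_rw [bernoulliWeight_indicator, ite_mul, one_mul, zero_mul, sum_ite_eq', mem_univ, if_true,
    hS]

/-- For `η ∈ [0,1]ⁿ` with `∑ᵢ ηᵢ = k` (`k` a positive integer) and `m ≤ k`,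
`e_m(η) ≥ (k choose m)`, with equality when exactly `k` of the `ηᵢ` equal `1`
and the rest are `0`. -/
theorem esymm_lower_bound (n k m : ℕ) (hk : 0 < k) (hm : m ≤ k)
    (η : Fin n → ℝ) (h0 : ∀ i, 0 ≤ η i) (h1 : ∀ i, η i ≤ 1)
    (hsum : ∑ i, η i = (k : ℝ)) :
    (k.choose m : ℝ) ≤
      ∑ α ∈ Finset.powersetCard m (Finset.univ : Finset (Fin n)), ∏ i ∈ α, η i ∧
    (∀ S : Finset (Fin n), S.card = k → (∀ i, η i = if i ∈ S then 1 else 0) →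
      ∑ α ∈ Finset.powersetCard m (Finset.univ : Finset (Fin n)), ∏ i ∈ α, η i
        = (k.choose m : ℝ)) :=
  esymm_lower_bound_general n k m η h0 h1 hsum
end
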